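/- arXiv:math/0703712 — 2 statements merged into one kernel-verified Lean document; each statement's English description precedes it below -/
import Mathlib

section
/- Let θ be irrational. The orbit of θ under the SL(2,ℤ)-action θ ↦ (aθ + b)/(cθ + d) (for integers a,b,c,d with ad − bc = 1) is dense in ℝ. -/
open Filter Topology

/-- For irrational `θ`, the `SL(2,ℤ)`-orbit of `θ` under linear-fractional
transformations is dense in `ℝ`. -/
theorem stmt_3 (θ : ℝ) (hθ : Irrational θ) :
    Dense {x : ℝ | ∃ a b c d : ℤ, a * d - b * c = 1 ∧
      x = ((a : ℝ) * θ + b) / ((c : ℝ) * θ + d)} := by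
  have hden : ∀ c d : ℤ, c ≠ 0 → (c : ℝ) * θ + d ≠ 0 := by
    intro c d hc h
    apply hθ
    refine ⟨(-d : ℚ) / c, ?_⟩
    have hc' : (c:ℝ) ≠ 0 := Int.cast_ne_zero.mpr hc
    push_cast
    field_simp
    linarith
  rw [← dense_closure]
  refine Rat.denseRange_cast.mono ?_
  rintro x ⟨r, rfl⟩
  obtain ⟨u, v, huv⟩ : IsCoprime (r.num) ((r.den : ℤ)) := by
    rw [Int.isCoprime_iff_gcd_eq_one]
    simpa [Int.gcd] using r.reduced
  set p := r.num with hp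
  set q := (r.den : ℤ) with hqdef
  have hq0 : (0:ℤ) < q := by rw [hqdef]; exact_mod_cast r.pos
  have hqne : q ≠ 0 := ne_of_gt hq0
  have hqR : (0:ℝ) < (q:ℝ) := by exact_mod_cast hq0
  have huvR : (u:ℝ) * p + (v:ℝ) * q = 1 := by exact_mod_cast huv
  have hmem : ∀ n : ℕ, ((p:ℝ) * θ + (((n : ℤ) * p - v : ℤ) : ℝ)) /
      ((q:ℝ) * θ + ((u + (n:ℤ) * q : ℤ) : ℝ)) ∈ {x : ℝ | ∃ a b c d : ℤ,
      a * d - b * c = 1 ∧ x = ((a : ℝ) * θ + b) / ((c : ℝ) * θ + d)} := by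
    intro n
    exact ⟨p, (n:ℤ)*p - v, q, u + (n:ℤ)*q, by linear_combination huv, rfl⟩
  have htod : Tendsto (fun n : ℕ => (q:ℝ) * ((q:ℝ) * θ + ((u + (n:ℤ) * q : ℤ) : ℝ)))
      atTop atTop := by
    have h1 : Tendsto (fun n : ℕ => ((n:ℝ)) * ((q:ℝ) * q)) atTop atTop :=
      Tendsto.atTop_mul_const (by positivity) tendsto_natCast_atTop_atTop
    have h2 := tendsto_atTop_add_const_right atTop ((q:ℝ) * ((q:ℝ) * θ + u)) h1
    refine h2.congr ?_
    intro n
    push_cast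
    ring
  have hlim : Tendsto (fun n : ℕ => ((p:ℝ) * θ + (((n : ℤ) * p - v : ℤ) : ℝ)) /
      ((q:ℝ) * θ + ((u + (n:ℤ) * q : ℤ) : ℝ))) atTop (𝓝 r) := by
    have heq : ∀ n : ℕ, ((p:ℝ) * θ + (((n : ℤ) * p - v : ℤ) : ℝ)) /
        ((q:ℝ) * θ + ((u + (n:ℤ) * q : ℤ) : ℝ))
        = (r:ℝ) - ((q:ℝ) * ((q:ℝ) * θ + ((u + (n:ℤ) * q : ℤ) : ℝ)))⁻¹ := by
      intro n
      have hd := hden q (u + (n:ℤ)*q) hqne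
      push_cast at hd
      have hrq : (r:ℝ) = (p:ℝ)/(q:ℝ) := by
        rw [Rat.cast_def, hp, hqdef]; push_cast; ring
      rw [hrq]
      push_cast
      have hq' : (q:ℝ) ≠ 0 := ne_of_gt hqR
      field_simp
      have hd' : θ * (q:ℝ) + ((u:ℝ) + (n:ℝ) * q) ≠ 0 := by rw [mul_comm]; exact hd
      rw [eq_sub_iff_add_eq, ← add_div, div_eq_iff hd']
      linear_combination (-1:ℝ) * huvR
    have h0 : Tendsto (fun n : ℕ => (r:ℝ) -
        ((q:ℝ) * ((q:ℝ) * θ + ((u + (n:ℤ) * q : ℤ) : ℝ)))⁻¹) atTop (𝓝 ((r:ℝ) - 0)) :=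
      tendsto_const_nhds.sub htod.inv_tendsto_atTop
    rw [sub_zero] at h0
    exact h0.congr fun n => (heq n).symm
  exact mem_closure_of_tendsto hlim (Filter.Eventually.of_forall hmem)
end

section
/- The quotient topological space of the irrational numbers by the SL(2,ℤ) linear-fractional action is not Hausdorff: any two nonempty open sets in the quotient intersect. -/
/-- Key density lemma: the `SL(2,ℤ)` orbit of an irrational `θ` comes within `ε`
of any real `x`, via an irrational value. -/
lemma sl2_orbit_dense (θ : ℝ) (hθ : Irrational θ) (x ε : ℝ) (hε : 0 < ε) :
    ∃ a b c d : ℤ, a * d - b * c = 1 ∧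
      Irrational (((a : ℝ) * θ + b) / ((c : ℝ) * θ + d)) ∧
      |((a : ℝ) * θ + b) / ((c : ℝ) * θ + d) - x| < ε := by
  obtain ⟨r, hr1, hr2⟩ := exists_rat_btwn (show x < x + ε / 2 by linarith)
  set p : ℤ := r.num with hp
  set q : ℤ := (r.den : ℤ) with hq
  have hq0 : (0 : ℤ) < q := by rw [hq]; exact_mod_cast r.pos
  have hq1 : (1 : ℝ) ≤ (q : ℝ) := by exact_mod_cast hq0
  have hqne : (q : ℝ) ≠ 0 := by positivity
  have hcop : IsCoprime p q := by
    rw [Int.isCoprime_iff_gcd_eq_one]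
    exact_mod_cast r.reduced
  obtain ⟨u, v, huv⟩ := hcop
  -- choose the second column large
  set k : ℤ := ⌈2 / ε + |(q : ℝ) * θ + u|⌉ with hk
  have hkr : (2 / ε + |(q : ℝ) * θ + u|) ≤ (k : ℝ) := Int.le_ceil _
  have hk0 : (0 : ℝ) ≤ (k : ℝ) := le_trans (by positivity) hkr
  set d : ℤ := u + k * q with hd
  set b : ℤ := -v + k * p with hb
  have hdet : p * d - b * q = 1 := by rw [hd, hb]; linear_combination huv
  have hdetR : (p : ℝ) * d - (b : ℝ) * q = 1 := by exact_mod_cast hdet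
  have hD : 2 / ε ≤ (q : ℝ) * θ + d := by
    have hdr : (d : ℝ) = (u : ℝ) + (k : ℝ) * q := by push_cast [hd]; ring
    have hkq : (k : ℝ) ≤ (k : ℝ) * q := le_mul_of_one_le_right hk0 hq1
    have h1 := neg_abs_le ((q : ℝ) * θ + u)
    rw [hdr]
    nlinarith [abs_nonneg ((q : ℝ) * θ + u)]
  have hε2 : 0 < 2 / ε := by positivity
  have hDpos : 0 < (q : ℝ) * θ + d := lt_of_lt_of_le hε2 hD
  have hDne : (q : ℝ) * θ + d ≠ 0 := ne_of_gt hDpos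
  have hDirr : Irrational ((q : ℝ) * θ + d) :=
    (hθ.intCast_mul (ne_of_gt hq0)).add_intCast d
  have hqD : 2 / ε ≤ (q : ℝ) * ((q : ℝ) * θ + d) :=
    le_trans hD (le_mul_of_one_le_left (le_of_lt hDpos) hq1)
  have hqDpos : 0 < (q : ℝ) * ((q : ℝ) * θ + d) := lt_of_lt_of_le hε2 hqD
  have hnum : (q : ℝ) * ((p : ℝ) * θ + b) = (p : ℝ) * ((q : ℝ) * θ + d) - 1 := by
    linear_combination -hdetR
  have hval : ((p : ℝ) * θ + b) / ((q : ℝ) * θ + d)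
      = (p : ℝ) / q - ((q : ℝ) * ((q : ℝ) * θ + d))⁻¹ := by
    calc ((p : ℝ) * θ + b) / ((q : ℝ) * θ + d)
        = ((q : ℝ) * ((p : ℝ) * θ + b)) / ((q : ℝ) * ((q : ℝ) * θ + d)) := by
          rw [mul_div_mul_left _ _ hqne]
      _ = ((p : ℝ) * ((q : ℝ) * θ + d) - 1) / ((q : ℝ) * ((q : ℝ) * θ + d)) := by rw [hnum]
      _ = (p : ℝ) / q - ((q : ℝ) * ((q : ℝ) * θ + d))⁻¹ := by
          field_simp
  have hcast : (((p : ℚ) / (q : ℚ) : ℚ) : ℝ) = (p : ℝ) / q := by push_cast; ring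
  refine ⟨p, b, q, d, hdet, ?_, ?_⟩
  · rw [hval, ← hcast]
    exact ((hDirr.intCast_mul (ne_of_gt hq0)).inv).ratCast_sub _
  · have hrx : |(r : ℝ) - x| < ε / 2 := by
      rw [abs_lt]; constructor <;> linarith
    have hrpq : (r : ℝ) = (p : ℝ) / q := by
      rw [hp, hq, Rat.cast_def]; push_cast; ring
    have hinv1 : ((q : ℝ) * ((q : ℝ) * θ + d))⁻¹ ≤ (2 / ε)⁻¹ :=
      inv_anti₀ hε2 hqD
    have hinv : ((q : ℝ) * ((q : ℝ) * θ + d))⁻¹ ≤ ε / 2 := by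
      rw [inv_div] at hinv1; exact hinv1
    have hinvpos : 0 < ((q : ℝ) * ((q : ℝ) * θ + d))⁻¹ := by positivity
    rw [hval, ← hrpq]
    rw [abs_lt] at hrx ⊢
    constructor <;> linarith [hrx.1, hrx.2]

/-- The quotient of the irrationals by the `SL(2,ℤ)` linear-fractional action is
not Hausdorff: any two nonempty open sets in the quotient intersect. -/
theorem stmt_16 :
    ∀ U V : Set (Quot (fun θ θ' : {x : ℝ // Irrational x} =>
        ∃ a b c d : ℤ, a * d - b * c = 1 ∧
          (θ' : ℝ) = ((a : ℝ) * θ + b) / ((c : ℝ) * θ + d))),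
      IsOpen U → IsOpen V → U.Nonempty → V.Nonempty → (U ∩ V).Nonempty := by
  intro U V hU hV ⟨u, hu⟩ ⟨v, hv⟩
  obtain ⟨θ, hθu⟩ := Quot.exists_rep u
  obtain ⟨ψ, hψv⟩ := Quot.exists_rep v
  have hWopen : IsOpen (Quot.mk _ ⁻¹' V) := hV.preimage isQuotientMap_quot_mk.continuous
  have hψW : ψ ∈ Quot.mk _ ⁻¹' V := by
    rw [Set.mem_preimage, hψv]; exact hv
  obtain ⟨ε, hε, hball⟩ := Metric.isOpen_iff.mp hWopen ψ hψW
  obtain ⟨a, b, c, d, hdet, hirr, hdist⟩ := sl2_orbit_dense θ.1 θ.2 ψ.1 ε hε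
  set φ : {x : ℝ // Irrational x} := ⟨_, hirr⟩ with hφ
  have hφball : φ ∈ Metric.ball ψ ε := by
    rw [Metric.mem_ball, Subtype.dist_eq, Real.dist_eq]
    exact hdist
  have hφV : Quot.mk _ φ ∈ V := hball hφball
  have hrel : ∃ a' b' c' d' : ℤ, a' * d' - b' * c' = 1 ∧
      (φ : ℝ) = ((a' : ℝ) * θ + b') / ((c' : ℝ) * θ + d') := ⟨a, b, c, d, hdet, rfl⟩
  have heq := Quot.sound (r := fun θ θ' : {x : ℝ // Irrational x} =>
      ∃ a b c d : ℤ, a * d - b * c = 1 ∧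
        (θ' : ℝ) = ((a : ℝ) * θ + b) / ((c : ℝ) * θ + d)) hrel
  refine ⟨Quot.mk _ φ, ?_, hφV⟩
  rw [← heq, hθu]
  exact hu
end
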